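/- arXiv:1911.01958 — 3 statements merged into one kernel-verified Lean document; each statement's English description precedes it below -/
import Mathlib

section
/- If λ and μ are partitions of r, then Δ_μ ⊆ Δ_λ if and only if λ is a refinement of μ (equivalently, μ is a coarsening of λ). -/
open MvPolynomial

noncomputable section

/-- The Zariski closure of a subset of the affine space `σ → K`. -/
def zClosure {K : Type} [Field K] {σ : Type} [Fintype σ] [DecidableEq σ]
    (S : Set (σ → K)) : Set (σ → K) :=
  {x | ∀ p : MvPolynomial σ K, (∀ y ∈ S, eval y p = 0) → eval x p = 0}

/-- A subset of affine space is Zariski closed if it equals its Zariski closure. -/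
def zClosed {K : Type} [Field K] {σ : Type} [Fintype σ] [DecidableEq σ]
    (S : Set (σ → K)) : Prop :=
  zClosure S = S

/-- Irreducibility of a subset of affine space in the Zariski topology,
tested against the basic open sets. -/
def zIrreducible {K : Type} [Field K] {σ : Type} [Fintype σ] [DecidableEq σ]
    (S : Set (σ → K)) : Prop :=
  S.Nonempty ∧ ∀ p q : MvPolynomial σ K,
    (∀ x ∈ S, eval x p = 0 ∨ eval x q = 0) →
    (∀ x ∈ S, eval x p = 0) ∨ (∀ x ∈ S, eval x q = 0)

/-- There is a strictly increasing chain of `m+1` irreducible Zariski-closed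
subsets contained in `S`. -/
def zChain {K : Type} [Field K] {σ : Type} [Fintype σ] [DecidableEq σ]
    (S : Set (σ → K)) (m : ℕ) : Prop :=
  ∃ c : Fin (m+1) → Set (σ → K),
    (∀ i, zIrreducible (c i) ∧ zClosed (c i) ∧ c i ⊆ S) ∧
    ∀ i j : Fin (m+1), i < j → c i ⊂ c j

/-- `S` has (Krull) dimension `m` in the Zariski topology. -/
def zDimEq {K : Type} [Field K] {σ : Type} [Fintype σ] [DecidableEq σ]
    (S : Set (σ → K)) (m : ℕ) : Prop :=
  zChain S m ∧ ¬ zChain S (m+1)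

/-- The (embedded, affine) Zariski tangent space to `S` at `a`: the common kernel of the
differentials at `a` of all polynomials vanishing on `S`. -/
def zTangentAt {K : Type} [Field K] {σ : Type} [Fintype σ] [DecidableEq σ]
    (S : Set (σ → K)) (a : σ → K) : Set (σ → K) :=
  {v | ∀ p : MvPolynomial σ K, (∀ y ∈ S, eval y p = 0) →
        ∑ i : σ, eval a (pderiv i p) * v i = 0}

/-- Dimension of the Zariski tangent space at a point. -/
def zTangentDim {K : Type} [Field K] {σ : Type} [Fintype σ] [DecidableEq σ]
    (S : Set (σ → K)) (a : σ → K) : ℕ :=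
  Module.finrank K (Submodule.span K (zTangentAt S a))

/-- The binary form of degree `r` with coefficient vector `a`. -/
def binForm {K : Type} [CommSemiring K] (r : ℕ) (a : Fin (r+1) → K) :
    MvPolynomial (Fin 2) K :=
  ∑ i : Fin (r+1), C (a i) * X 0 ^ (r - (i : ℕ)) * X 1 ^ (i : ℕ)

/-- The linear binary form `u·x + v·y`. -/
def linForm {K : Type} [CommSemiring K] (u v : K) : MvPolynomial (Fin 2) K :=
  C u * X 0 + C v * X 1

/-- The affine cone over the coincident root locus `Δ_λ ⊆ ℙ^r`, in coefficient coordinates: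
scalar multiples of forms `∏ ℓ_i ^ λ_i`. -/
def crlCone (r n : ℕ) (lam : Fin n → ℕ) : Set (Fin (r+1) → ℂ) :=
  {a | ∃ (t : ℂ) (u v : Fin n → ℂ),
    binForm r a = C t * ∏ i, (linForm (u i) (v i)) ^ lam i}

/-- `lam` is a partition of `r` of length `n` (all parts positive). -/
def isPartitionOf (r n : ℕ) (lam : Fin n → ℕ) : Prop :=
  (∀ i, 1 ≤ lam i) ∧ ∑ i, lam i = r

/-- The multiplicity `m_j` of the part `j` in the partition `lam`. -/
def multOf {n : ℕ} (lam : Fin n → ℕ) (jj : ℕ) : ℕ :=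
  (Finset.univ.filter fun i => lam i = jj).card

/-- The differential operator of degree `s` with coefficient vector `b`, i.e.
`∑ b_i ∂x^(s-i) ∂y^i`, applied to `f`. -/
def diffOp {K : Type} [CommSemiring K] (s : ℕ) (b : Fin (s+1) → K)
    (f : MvPolynomial (Fin 2) K) : MvPolynomial (Fin 2) K :=
  ∑ i : Fin (s+1), b i •
    ((fun g => pderiv (0 : Fin 2) g)^[s - (i : ℕ)]
      (((fun g => pderiv (1 : Fin 2) g)^[(i : ℕ)]) f))

/-- The apolarity pairing between a degree-`d` operator (coefficients `h`) and a
degree-`d` form (coefficients `a`). -/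
def apolarPair (d : ℕ) (h a : Fin (d+1) → ℂ) : ℂ :=
  eval (fun _ => (0 : ℂ)) (diffOp d h (binForm d a))

/-- The cone over the dual variety of the cone `S ⊆ ℂ^(m+1)` (with `k` the dimension of the
cone `S`, used to select smooth points): closure of the set of hyperplanes, written in dual
coordinates via the apolarity pairing, containing an embedded tangent space at a smooth point. -/
def dualConeOf (m : ℕ) (S : Set (Fin (m+1) → ℂ)) (k : ℕ) : Set (Fin (m+1) → ℂ) :=
  zClosure {h | h ≠ 0 ∧ ∃ a ∈ S, a ≠ 0 ∧ zTangentDim S a = k ∧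
      ∀ v ∈ zTangentAt S a, apolarPair m h v = 0}

/-- The row span of a matrix, as a subspace of `ℂ^m`. -/
def rowSpan {k m : ℕ} (M : Matrix (Fin k) (Fin m) ℂ) : Submodule ℂ (Fin m → ℂ) :=
  Submodule.span ℂ (Set.range fun i => M i)

/-- The (redundant) Plücker coordinate vector of the row span of `M`: all maximal minors. -/
def plucker {k m : ℕ} (M : Matrix (Fin k) (Fin m) ℂ) : (Fin k → Fin m) → ℂ :=
  fun s => (M.submatrix id s).det

/-- The degree-`s` component of the apolar ideal of the degree-`d` form with
coefficients `a`, as a subset of the coefficient space of operators. -/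
def apolarSet (d s : ℕ) (a : Fin (d+1) → ℂ) : Set (Fin (s+1) → ℂ) :=
  {b | diffOp s b (binForm d a) = 0}

/-- The (pre-closure) cone, in Plücker coordinates, over the `j`-th higher associated variety
`CH_j(S)`: spans of `k`-row matrices whose row space contains a smooth point `x` of the cone
`S` (`dimS` = dimension of the cone `S`) and meets the tangent space at `x` in projective
dimension at least `j`. -/
def smoothCHCone (m : ℕ) (S : Set (Fin (m+1) → ℂ)) (dimS k j : ℕ) :
    Set ((Fin k → Fin (m+1)) → ℂ) :=
  {u | ∃ M : Matrix (Fin k) (Fin (m+1)) ℂ, u = plucker M ∧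
    Module.finrank ℂ (rowSpan M) = k ∧
    ∃ x, x ≠ 0 ∧ x ∈ S ∧ zTangentDim S x = dimS ∧ x ∈ rowSpan M ∧
      j + 1 ≤ Module.finrank ℂ ↥(rowSpan M ⊓ Submodule.span ℂ (zTangentAt S x))}

/-- The (pre-closure) cone, in Plücker coordinates, over `Ξ_0(S)`: spans of `k`-row matrices
whose row space meets the cone `S` nontrivially. -/
def meetCone (m : ℕ) (S : Set (Fin (m+1) → ℂ)) (k : ℕ) :
    Set ((Fin k → Fin (m+1)) → ℂ) :=
  {u | ∃ M : Matrix (Fin k) (Fin (m+1)) ℂ, u = plucker M ∧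
    Module.finrank ℂ (rowSpan M) = k ∧ ∃ x, x ≠ 0 ∧ x ∈ S ∧ x ∈ rowSpan M}

/-- The preimage under the apolar map `Ψ_{d,s}` of a subset `T` of the Grassmannian
(in Plücker coordinates) of `(k-1)`-projective-dimensional subspaces of `ℙ(D_s)`. -/
def apolarPull (d s k : ℕ) (T : Set ((Fin k → Fin (s+1)) → ℂ)) : Set (Fin (d+1) → ℂ) :=
  {a | ∃ M : Matrix (Fin k) (Fin (s+1)) ℂ,
    rowSpan M = Submodule.span ℂ (apolarSet d s a) ∧
    Module.finrank ℂ (rowSpan M) = k ∧ plucker M ∈ T}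

/-- The Waring rank over `K` of a binary form: the least `r` such that `f` is a sum of `r`
scalar multiples of `d`-th powers of linear forms. -/
def waringRank {K : Type} [Field K] (d : ℕ) (f : MvPolynomial (Fin 2) K) : ℕ :=
  sInf {r | ∃ (α u v : Fin r → K), f = ∑ i, α i • (linForm (u i) (v i)) ^ d}

/-- The set of coefficient vectors of real binary forms of degree `d` of real rank `r`. -/
def realRankSet (d r : ℕ) : Set (Fin (d+1) → ℝ) :=
  {a | waringRank d (binForm d a) = r}

/-- `R_{d,r}`: the interior, in the Euclidean topology, of the set of real binary forms of
degree `d` and real rank `r`. -/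
def Rdr (d r : ℕ) : Set (Fin (d+1) → ℝ) := interior (realRankSet d r)

/-- The topological boundary of `R_{d,r}`: the closure of `R_{d,r}` minus the interior of
the closure. -/
def topBoundary (d r : ℕ) : Set (Fin (d+1) → ℝ) :=
  closure (Rdr d r) \ interior (closure (Rdr d r))

/-- The algebraic boundary `∂_alg(R_{d,r})`: the Zariski closure over `ℂ` of the topological
boundary of `R_{d,r}`. -/
def algBoundary (d r : ℕ) : Set (Fin (d+1) → ℂ) :=
  zClosure ((fun a i => ((a i : ℝ) : ℂ)) '' topBoundary d r)


/-! ### Auxiliary lemmas for STATEMENT 4 -/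

def eVec (r : ℕ) (i : Fin (r+1)) : Fin 2 →₀ ℕ :=
  Finsupp.single 0 (r - (i : ℕ)) + Finsupp.single 1 (i : ℕ)

lemma binForm_eq_sum_monomial {K : Type} [CommSemiring K] (r : ℕ) (a : Fin (r+1) → K) :
    binForm r a = ∑ i : Fin (r+1), monomial (eVec r i) (a i) := by
  unfold binForm eVec
  refine Finset.sum_congr rfl fun i _ => ?_
  rw [MvPolynomial.C_mul_X_pow_eq_monomial, MvPolynomial.X_pow_eq_monomial,
    MvPolynomial.monomial_mul, mul_one]

lemma eVec_apply_one (r : ℕ) (i : Fin (r+1)) : eVec r i 1 = (i : ℕ) := by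
  simp [eVec, Finsupp.single_apply]

lemma degree_fin2 (m : Fin 2 →₀ ℕ) : m.degree = m 0 + m 1 := by
  rw [Finsupp.degree, ← Fin.sum_univ_two (fun i => m i)]
  exact Finset.sum_subset (Finset.subset_univ _)
    (fun x _ hx => by simpa [Finsupp.mem_support_iff] using hx)

lemma homog_eq_binForm {r : ℕ} {f : MvPolynomial (Fin 2) ℂ} (hf : f.IsHomogeneous r) :
    binForm r (fun i => coeff (eVec r i) f) = f := by
  rw [binForm_eq_sum_monomial]
  apply MvPolynomial.ext
  intro m
  rw [MvPolynomial.coeff_sum]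
  simp_rw [MvPolynomial.coeff_monomial]
  by_cases hm : ∃ i : Fin (r+1), eVec r i = m
  · obtain ⟨i0, rfl⟩ := hm
    rw [Finset.sum_eq_single i0 (fun j _ hj => by
      rw [if_neg]; intro hEq
      exact hj (Fin.ext (by rw [← eVec_apply_one r j, hEq, eVec_apply_one]))) (by simp)]
    simp
  · push_neg at hm
    rw [Finset.sum_eq_zero (fun j _ => if_neg (hm j))]
    by_contra h0
    have hdeg : m.degree = r := by
      rw [Finsupp.degree_eq_weight_one]; exact hf (fun h => h0 h.symm)
    rw [degree_fin2] at hdeg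
    have hle : m 1 ≤ r := by omega
    exact (hm ⟨m 1, Nat.lt_succ_of_le hle⟩) (by
      ext a
      fin_cases a <;> simp [eVec, Finsupp.single_apply] <;> omega)

def dehom : MvPolynomial (Fin 2) ℂ →ₐ[ℂ] Polynomial ℂ :=
  aeval (fun i : Fin 2 => if i = 0 then (Polynomial.X : Polynomial ℂ) else 1)

lemma dehom_linForm (u v : ℂ) :
    dehom (linForm u v) = Polynomial.C u * Polynomial.X + Polynomial.C v := by
  simp [dehom, linForm, Polynomial.algebraMap_eq]

lemma dehom_C (t : ℂ) : dehom (C t) = Polynomial.C t := by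
  simp [dehom, Polynomial.algebraMap_eq]

lemma roots_X_add_C' (c : ℂ) : (Polynomial.X + Polynomial.C c).roots = {-c} := by
  rw [show Polynomial.X + Polynomial.C c = Polynomial.X - Polynomial.C (-c) by
    rw [map_neg, sub_neg_eq_add]]
  exact Polynomial.roots_X_sub_C (-c)

lemma isHomog_linForm (u v : ℂ) : (linForm u v).IsHomogeneous 1 :=
  (MvPolynomial.isHomogeneous_C_mul_X u 0).add (MvPolynomial.isHomogeneous_C_mul_X v 1)

lemma monic_prod_linear {n : ℕ} (w : Fin n → ℕ) (b : Fin n → ℂ) :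
    (∏ i, (Polynomial.X + Polynomial.C (b i)) ^ w i).Monic :=
  Polynomial.monic_prod_of_monic _ _ fun i _ => (Polynomial.monic_X_add_C (b i)).pow (w i)

lemma count_roots_prod_linear {n : ℕ} (w : Fin n → ℕ) (b : Fin n → ℂ) (z : ℂ) :
    Multiset.count z (∏ i, (Polynomial.X + Polynomial.C (b i)) ^ w i).roots
      = ∑ i, w i * (if z = -(b i) then 1 else 0) := by
  rw [Polynomial.roots_prod _ _ (monic_prod_linear w b).ne_zero, Multiset.count_bind]
  rw [Finset.sum_eq_multiset_sum]
  simp_rw [Polynomial.roots_pow, roots_X_add_C', Multiset.count_nsmul,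
    Multiset.count_singleton]


/-- for partitions `λ` (length `n`) and `μ` (length `n'`) of `r`,
`Δ_μ ⊆ Δ_λ` iff `λ` refines `μ`, i.e. `μ` is obtained from `λ` by merging parts. -/
theorem crl_containment_iff_refinement (r n n' : ℕ) (lam : Fin n → ℕ) (mu : Fin n' → ℕ)
    (hlam : isPartitionOf r n lam) (hmu : isPartitionOf r n' mu) :
    crlCone r n' mu ⊆ crlCone r n lam ↔
      ∃ g : Fin n → Fin n',
        ∀ j, mu j = ∑ i ∈ Finset.univ.filter (fun i => g i = j), lam i := by
  constructor
  · -- containment implies refinement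
    intro h
    classical
    set c : Fin n' → ℂ := fun j => ((j : ℕ) : ℂ) with hcdef
    have hcinj : Function.Injective c := fun j1 j2 hj =>
      Fin.ext (Nat.cast_injective hj)
    have hP : (∏ j, linForm 1 (c j) ^ mu j : MvPolynomial (Fin 2) ℂ).IsHomogeneous r := by
      rw [← hmu.2]
      exact MvPolynomial.IsHomogeneous.prod Finset.univ _ mu
        (fun j _ => by simpa using (isHomog_linForm 1 (c j)).pow (mu j))
    have ha := homog_eq_binForm hP
    have hmem : (fun i => coeff (eVec r i) (∏ j, linForm 1 (c j) ^ mu j))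
        ∈ crlCone r n' mu :=
      ⟨1, fun _ => 1, c, by rw [ha, map_one, one_mul]⟩
    obtain ⟨t, u, v, hEq⟩ := h hmem
    rw [ha] at hEq
    have hpoly : (∏ j, (Polynomial.X + Polynomial.C (c j)) ^ mu j)
        = Polynomial.C t *
          ∏ i, (Polynomial.C (u i) * Polynomial.X + Polynomial.C (v i)) ^ lam i := by
      have h2 := congrArg (fun q => dehom q) hEq
      simpa only [map_prod, map_pow, map_mul, dehom_linForm, dehom_C,
        map_one, one_mul] using h2
    have hpne : (∏ j, (Polynomial.X + Polynomial.C (c j)) ^ mu j : Polynomial ℂ) ≠ 0 :=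
      (monic_prod_linear mu c).ne_zero
    have ht0 : t ≠ 0 := by
      rintro rfl
      rw [map_zero, zero_mul] at hpoly
      exact hpne hpoly
    have hqne : ∀ i, (Polynomial.C (u i) * Polynomial.X + Polynomial.C (v i)) ≠ 0 := by
      intro i h0
      apply hpne
      rw [hpoly, Finset.prod_eq_zero (Finset.mem_univ i)
        (by rw [h0, zero_pow (Nat.one_le_iff_ne_zero.mp (hlam.1 i))]), mul_zero]
    have hdegp : (∏ j, (Polynomial.X + Polynomial.C (c j)) ^ mu j
        : Polynomial ℂ).natDegree = r := by
      rw [Polynomial.natDegree_prod _ _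
        (fun j _ => pow_ne_zero _ (Polynomial.monic_X_add_C (c j)).ne_zero)]
      simp [Polynomial.natDegree_pow, Polynomial.natDegree_X_add_C, hmu.2]
    have hdegsum : ∑ i, lam i *
        (Polynomial.C (u i) * Polynomial.X + Polynomial.C (v i)).natDegree = r := by
      rw [← hdegp, hpoly, Polynomial.natDegree_C_mul ht0,
        Polynomial.natDegree_prod _ _ (fun i _ => pow_ne_zero _ (hqne i))]
      simp [Polynomial.natDegree_pow]
    have hu : ∀ i, u i ≠ 0 := by
      intro i hu0
      have hle : ∀ i' ∈ Finset.univ, lam i' *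
          (Polynomial.C (u i') * Polynomial.X + Polynomial.C (v i')).natDegree ≤ lam i' :=
        fun i' _ => by
          calc lam i' * _ ≤ lam i' * 1 :=
                Nat.mul_le_mul_left _ Polynomial.natDegree_linear_le
            _ = lam i' := mul_one _
      have heach := (Finset.sum_eq_sum_iff_of_le hle).mp
        (hdegsum.trans hlam.2.symm) i (Finset.mem_univ i)
      rw [hu0, map_zero, zero_mul, zero_add, Polynomial.natDegree_C, mul_zero] at heach
      exact Nat.one_le_iff_ne_zero.mp (hlam.1 i) heach.symm
    have hq : ∀ i, (Polynomial.C (u i) * Polynomial.X + Polynomial.C (v i))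
        = Polynomial.C (u i) * (Polynomial.X + Polynomial.C (v i / u i)) := fun i => by
      rw [mul_add, ← Polynomial.C_mul, mul_div_cancel₀ (v i) (hu i)]
    have hcount : ∀ z, Multiset.count z
        (∏ j, (Polynomial.X + Polynomial.C (c j)) ^ mu j : Polynomial ℂ).roots
        = ∑ j, mu j * (if z = -(c j) then 1 else 0) :=
      fun z => count_roots_prod_linear mu c z
    have hcount2 : ∀ z, Multiset.count z
        (∏ j, (Polynomial.X + Polynomial.C (c j)) ^ mu j : Polynomial ℂ).roots
        = ∑ i, lam i * (if z = -(v i / u i) then 1 else 0) := by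
      intro z
      have hsplit : ∏ i, (Polynomial.C (u i) * Polynomial.X + Polynomial.C (v i)) ^ lam i
          = Polynomial.C (∏ i, (u i) ^ lam i) *
            ∏ i, (Polynomial.X + Polynomial.C (v i / u i)) ^ lam i := by
        simp_rw [hq, mul_pow]
        rw [Finset.prod_mul_distrib, map_prod]
        simp [map_pow]
      rw [hpoly, hsplit, ← mul_assoc, ← map_mul,
        Polynomial.roots_C_mul _ (mul_ne_zero ht0
          (Finset.prod_ne_zero_iff.mpr fun i _ => pow_ne_zero _ (hu i)))]
      exact count_roots_prod_linear lam (fun i => v i / u i) z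
    have hex : ∀ i : Fin n, ∃ j : Fin n', v i / u i = c j := by
      intro i
      by_contra hno
      push_neg at hno
      have h1 : Multiset.count (-(v i / u i))
          (∏ j, (Polynomial.X + Polynomial.C (c j)) ^ mu j : Polynomial ℂ).roots = 0 := by
        rw [hcount]
        exact Finset.sum_eq_zero fun j _ => by
          rw [if_neg (fun hzz => hno j (neg_inj.mp hzz)), mul_zero]
      have h2 : 1 ≤ Multiset.count (-(v i / u i))
          (∏ j, (Polynomial.X + Polynomial.C (c j)) ^ mu j : Polynomial ℂ).roots := by
        rw [hcount2]
        calc 1 ≤ lam i * (if (-(v i / u i) : ℂ) = -(v i / u i) then 1 else 0) := by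
              rw [if_pos rfl, mul_one]; exact hlam.1 i
          _ ≤ _ := Finset.single_le_sum
              (f := fun i' => lam i' * (if (-(v i / u i) : ℂ) = -(v i' / u i') then 1 else 0))
              (fun i' _ => Nat.zero_le _) (Finset.mem_univ i)
      omega
    choose g hgspec using hex
    refine ⟨g, fun j => ?_⟩
    have hj1 : Multiset.count (-(c j))
        (∏ j', (Polynomial.X + Polynomial.C (c j')) ^ mu j' : Polynomial ℂ).roots = mu j := by
      rw [hcount, Finset.sum_eq_single j
        (fun j' _ hj' => by
          rw [if_neg (fun hzz => hj' (hcinj (neg_inj.mp hzz)).symm), mul_zero])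
        (by simp)]
      rw [if_pos rfl, mul_one]
    have hj2 : Multiset.count (-(c j))
        (∏ j', (Polynomial.X + Polynomial.C (c j')) ^ mu j' : Polynomial ℂ).roots
        = ∑ i ∈ Finset.univ.filter (fun i => g i = j), lam i := by
      rw [hcount2, Finset.sum_filter]
      refine Finset.sum_congr rfl fun i _ => ?_
      simp only [hgspec i]
      by_cases hgi : g i = j
      · rw [if_pos hgi, if_pos (by rw [hgi]), mul_one]
      · rw [if_neg hgi, if_neg (fun hzz => hgi (hcinj (neg_inj.mp hzz)).symm), mul_zero]
    rw [← hj1, hj2]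
  · -- refinement implies containment
    rintro ⟨g, hg⟩ a ⟨t, u, v, ha⟩
    refine ⟨t, fun i => u (g i), fun i => v (g i), ?_⟩
    rw [ha]
    congr 1
    rw [← Finset.prod_fiberwise Finset.univ g
      (fun i => linForm (u (g i)) (v (g i)) ^ lam i)]
    refine Finset.prod_congr rfl fun j _ => ?_
    rw [show (∏ i ∈ Finset.univ.filter (fun i => g i = j),
        linForm (u (g i)) (v (g i)) ^ lam i)
        = ∏ i ∈ Finset.univ.filter (fun i => g i = j), linForm (u j) (v j) ^ lam i from
      Finset.prod_congr rfl fun i hi => by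
        rw [(Finset.mem_filter.mp hi).2]]
    rw [Finset.prod_pow_eq_pow_sum, ← hg j]
end
end

section
/- For a binary form f ∈ K[x,y]_d and distinct linear forms ℓ_1,…,ℓ_r ∈ K[x,y]_1, there exist coefficients α_i ∈ K with f = Σ_{i=1}^r α_i ℓ_i^d if and only if the differential operator ℓ_1^⊥ ∘ ⋯ ∘ ℓ_r^⊥ annihilates f. -/
open MvPolynomial

noncomputable section

/-!
For `ℓ = a x + b y` and `ℓ' = u x + v y` one has `ℓ^⊥ ℓ'^k = k (a v - b u) ℓ'^(k-1)`; in
particular `ℓ^⊥` kills `ℓ^k`, which gives one direction. Conversely, induct on `r`: `ℓ_1^⊥ f` is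
annihilated by the remaining operators, so it is a combination of the `ℓ_i^(d-1)`, `i ≥ 2`. As
`ℓ_1^⊥` maps `ℓ_i^d` to a nonzero multiple of `ℓ_i^(d-1)` for `i ≠ 1`, subtracting a combination
of the `ℓ_i^d` leaves a form in the kernel of `ℓ_1^⊥`. Euler's identity turns `ℓ^⊥ g = 0` into
`d a g = ℓ ∂_x g` and `d b g = ℓ ∂_y g`; as `∂_x, ∂_y` commute with `ℓ^⊥`, induction on the
degree shows that this kernel is spanned by `ℓ^d`.
-/

namespace MvPolynomial

theorem pderiv_pderiv_comm {R σ : Type*} [CommRing R] (i j : σ) (f : MvPolynomial σ R) :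
    pderiv i (pderiv j f) = pderiv j (pderiv i f) := by
  have h : ⁅pderiv i, pderiv j⁆ = (0 : Derivation R (MvPolynomial σ R) (MvPolynomial σ R)) :=
    derivation_ext fun k => by
      classical
      rw [Derivation.commutator_apply]
      simp only [pderiv_X, Pi.single_apply]
      split_ifs <;> simp
  have := congr($h f)
  rwa [Derivation.commutator_apply, Derivation.zero_apply, sub_eq_zero] at this

theorem eq_C_of_isHomogeneous_zero {R σ : Type*} [CommSemiring R] {f : MvPolynomial σ R}
    (hf : f.IsHomogeneous 0) : f = C (coeff 0 f) :=
  totalDegree_eq_zero_iff_eq_C.mp ((totalDegree_zero_iff_isHomogeneous σ).mpr hf)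

end MvPolynomial

theorem List.foldl_apply_eq_prod {R M ι : Type*} [Semiring R] [AddCommMonoid M] [Module R M]
    (L : ι → Module.End R M) (l : List ι) (x : M) :
    l.foldl (fun g i => L i g) x = (l.map L).reverse.prod x := by
  induction l generalizing x with
  | nil => rfl
  | cons i t ih => simp [ih, List.prod_append, Module.End.mul_apply]

section Apolarity

variable {K : Type} [Field K]

theorem isHomogeneous_linForm_pow (u v : K) (n : ℕ) : (linForm u v ^ n).IsHomogeneous n := by
  unfold linForm
  simpa using ((isHomogeneous_C_mul_X u 0).add (isHomogeneous_C_mul_X v 1)).pow n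

/-- `(a x + b y)^⊥ = -b ∂_x + a ∂_y`. -/
def linFormPerp (a b : K) : Module.End K (MvPolynomial (Fin 2) K) :=
  a • (pderiv 1).toLinearMap - b • (pderiv 0).toLinearMap

theorem linFormPerp_apply (a b : K) (f : MvPolynomial (Fin 2) K) :
    linFormPerp a b f = a • pderiv 1 f - b • pderiv 0 f :=
  rfl

theorem linFormPerp_linForm_pow (a b u v : K) (n : ℕ) :
    linFormPerp a b (linForm u v ^ n) = (n * (a * v - b * u)) • linForm u v ^ (n - 1) := by
  have h₀ : pderiv 0 (linForm u v) = C u := by simp [linForm]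
  have h₁ : pderiv 1 (linForm u v) = C v := by simp [linForm]
  simp only [linFormPerp_apply, pderiv_pow, h₀, h₁, smul_eq_C_mul, map_mul, map_sub, map_natCast]
  ring

theorem linFormPerp_linForm_pow_self (a b : K) (n : ℕ) :
    linFormPerp a b (linForm a b ^ n) = 0 := by
  simp [linFormPerp_linForm_pow, mul_comm]

theorem pderiv_linFormPerp (i : Fin 2) (a b : K) (f : MvPolynomial (Fin 2) K) :
    pderiv i (linFormPerp a b f) = linFormPerp a b (pderiv i f) := by
  simp [linFormPerp_apply, pderiv_pderiv_comm i]

theorem MvPolynomial.IsHomogeneous.linFormPerp {f : MvPolynomial (Fin 2) K} {d : ℕ}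
    (hf : f.IsHomogeneous d) (a b : K) : (linFormPerp a b f).IsHomogeneous (d - 1) := by
  have h₀ : pderiv 0 f ∈ homogeneousSubmodule (Fin 2) K (d - 1) := hf.pderiv
  have h₁ : pderiv 1 f ∈ homogeneousSubmodule (Fin 2) K (d - 1) := hf.pderiv
  exact Submodule.sub_mem _ (Submodule.smul_mem _ a h₁) (Submodule.smul_mem _ b h₀)

theorem linForm_mul_pderiv_of_linFormPerp_eq_zero {a b : K} {f : MvPolynomial (Fin 2) K}
    {d : ℕ} (hf : f.IsHomogeneous d) (h : linFormPerp a b f = 0) (i : Fin 2) :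
    linForm a b * pderiv i f = (d * ![a, b] i) • f := by
  have euler := hf.sum_X_mul_pderiv
  rw [Fin.sum_univ_two, nsmul_eq_mul] at euler
  rw [linFormPerp_apply, smul_eq_C_mul, smul_eq_C_mul] at h
  fin_cases i <;>
    simp only [linForm, smul_eq_C_mul, map_mul, map_natCast, Fin.zero_eta, Fin.mk_one,
      Matrix.cons_val_zero, Matrix.cons_val_one, Matrix.cons_val_fin_one]
  · linear_combination C a * euler - X 1 * h
  · linear_combination C b * euler + X 0 * h

theorem exists_eq_smul_linForm_pow_of_linFormPerp_eq_zero [CharZero K] {a b : K}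
    (hab : a ≠ 0 ∨ b ≠ 0) {d : ℕ} {f : MvPolynomial (Fin 2) K} (hf : f.IsHomogeneous d)
    (h : linFormPerp a b f = 0) : ∃ c : K, f = c • linForm a b ^ d := by
  obtain ⟨i, hi⟩ : ∃ i : Fin 2, ![a, b] i ≠ 0 := hab.elim (⟨0, ·⟩) (⟨1, ·⟩)
  induction d generalizing f with
  | zero => exact ⟨coeff 0 f, by simpa [smul_eq_C_mul] using eq_C_of_isHomogeneous_zero hf⟩
  | succ e ih =>
    obtain ⟨c, hc⟩ := ih (hf.pderiv (i := i)) (by rw [← pderiv_linFormPerp, h, map_zero])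
    have hk : ((e + 1 : ℕ) * ![a, b] i : K) ≠ 0 :=
      mul_ne_zero (Nat.cast_ne_zero.mpr e.succ_ne_zero) hi
    have key := linForm_mul_pderiv_of_linFormPerp_eq_zero hf h i
    rw [hc, mul_smul_comm, ← pow_succ'] at key
    refine ⟨((e + 1 : ℕ) * ![a, b] i : K)⁻¹ * c, ?_⟩
    rw [← smul_smul, key, inv_smul_smul₀ hk]

theorem exists_linFormPerp_sum_smul_linForm_pow_eq [CharZero K] {ι : Type*} [Fintype ι]
    {a b : K} {u v : ι → K} (h : ∀ i, a * v i - b * u i ≠ 0) (n : ℕ) (β : ι → K) :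
    ∃ γ : ι → K, linFormPerp a b (∑ i, γ i • linForm (u i) (v i) ^ (n + 1)) =
      ∑ i, β i • linForm (u i) (v i) ^ n := by
  refine ⟨fun i => β i / ((n + 1) * (a * v i - b * u i)), ?_⟩
  rw [map_sum]
  refine Finset.sum_congr rfl fun i _ => ?_
  rw [map_smul, linFormPerp_linForm_pow, Nat.add_sub_cancel, smul_smul]
  have := h i
  congr 1
  push_cast
  field_simp

/-- `ℓ_{i_k}^⊥ ∘ ⋯ ∘ ℓ_{i_1}^⊥` for `l = [i_1, …, i_k]` and `ℓ_i = A i x + B i y`. -/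
def linFormPerpProd {ι : Type*} (A B : ι → K) (l : List ι) :
    Module.End K (MvPolynomial (Fin 2) K) :=
  (l.map fun i => linFormPerp (A i) (B i)).reverse.prod

theorem linFormPerpProd_cons {ι : Type*} (A B : ι → K) (i : ι) (l : List ι) :
    linFormPerpProd A B (i :: l) = linFormPerpProd A B l * linFormPerp (A i) (B i) := by
  simp [linFormPerpProd]

theorem linFormPerpProd_finRange_succ {r : ℕ} (A B : Fin (r + 1) → K) :
    linFormPerpProd A B (List.finRange (r + 1)) =
      linFormPerpProd (A ∘ Fin.succ) (B ∘ Fin.succ) (List.finRange r) *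
        linFormPerp (A 0) (B 0) := by
  simp [List.finRange_succ, linFormPerpProd, Function.comp_def]

theorem linFormPerpProd_linForm_pow_of_mem {ι : Type*} (A B : ι → K) {l : List ι} {j : ι}
    (hj : j ∈ l) (n : ℕ) : linFormPerpProd A B l (linForm (A j) (B j) ^ n) = 0 := by
  induction l generalizing n with
  | nil => simp at hj
  | cons i t ih =>
    rw [linFormPerpProd_cons, Module.End.mul_apply]
    rcases List.mem_cons.mp hj with rfl | hj
    · rw [linFormPerp_linForm_pow_self, map_zero]
    · rw [linFormPerp_linForm_pow, map_smul, ih hj, smul_zero]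

theorem exists_eq_sum_smul_linForm_pow_of_linFormPerpProd_eq_zero [CharZero K] :
    ∀ {r : ℕ} {A B : Fin r → K}, (∀ i, A i ≠ 0 ∨ B i ≠ 0) →
      (∀ i j, i ≠ j → A i * B j ≠ A j * B i) → ∀ {d : ℕ} {f : MvPolynomial (Fin 2) K},
      f.IsHomogeneous d → linFormPerpProd A B (List.finRange r) f = 0 →
      ∃ α : Fin r → K, f = ∑ i, α i • linForm (A i) (B i) ^ d
  | 0, _, _, _, _, _, _, _, h => ⟨0, by simpa [linFormPerpProd] using h⟩
  | _ + 1, _, _, _, _, 0, f, hf, _ =>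
    ⟨Fin.cons (coeff 0 f) 0, by
      rw [Fin.sum_univ_succ]; simpa [smul_eq_C_mul] using eq_C_of_isHomogeneous_zero hf⟩
  | r + 1, A, B, hne, hdist, e + 1, f, hf, h => by
    rw [linFormPerpProd_finRange_succ, Module.End.mul_apply] at h
    obtain ⟨β, hβ⟩ := exists_eq_sum_smul_linForm_pow_of_linFormPerpProd_eq_zero
      (fun i => hne i.succ) (fun i j hij => hdist _ _ ((Fin.succ_injective _).ne hij))
      (d := e) (hf.linFormPerp _ _) h
    have hdist₀ (i : Fin r) : A 0 * B i.succ - B 0 * A i.succ ≠ 0 :=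
      sub_ne_zero.mpr <| by
        simpa [mul_comm (B 0)] using hdist 0 i.succ (Fin.succ_ne_zero i).symm
    obtain ⟨γ, hγ⟩ := exists_linFormPerp_sum_smul_linForm_pow_eq (u := A ∘ Fin.succ)
      (v := B ∘ Fin.succ) hdist₀ e β
    have hsum : (∑ i, γ i • linForm (A i.succ) (B i.succ) ^ (e + 1)).IsHomogeneous (e + 1) :=
      IsHomogeneous.sum _ _ _ fun i _ =>
        (homogeneousSubmodule _ _ _).smul_mem _ (isHomogeneous_linForm_pow _ _ _)
    obtain ⟨c, hc⟩ := exists_eq_smul_linForm_pow_of_linFormPerp_eq_zero (hne 0) (hf.sub hsum)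
      (by rw [map_sub, sub_eq_zero, hβ]; exact hγ.symm)
    exact ⟨Fin.cons c γ, by simpa [Fin.sum_univ_succ] using sub_eq_iff_eq_add.mp hc⟩

end Apolarity

/-- Apolarity Lemma: for a binary form `f` of degree `d` over a field `K` of
characteristic zero and pairwise distinct (nonzero, mutually non-proportional) linear forms
`ℓ_i = A_i x + B_i y`, `f` is a `K`-linear combination of the `ℓ_i^d` iff the composition of
the operators `ℓ_i^⊥ = −B_i ∂x + A_i ∂y` annihilates `f`. -/
theorem apolarity_lemma (K : Type) [Field K] [CharZero K] (d r : ℕ)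
    (f : MvPolynomial (Fin 2) K) (hf : f.IsHomogeneous d)
    (A B : Fin r → K) (hne : ∀ i, A i ≠ 0 ∨ B i ≠ 0)
    (hdist : ∀ i j, i ≠ j → A i * B j ≠ A j * B i) :
    (∃ α : Fin r → K, f = ∑ i, α i • (linForm (A i) (B i)) ^ d) ↔
      (List.finRange r).foldl
        (fun g i => A i • pderiv (1 : Fin 2) g - B i • pderiv (0 : Fin 2) g) f = 0 := by
  change _ ↔ (List.finRange r).foldl (fun g i => linFormPerp (A i) (B i) g) f = 0
  rw [List.foldl_apply_eq_prod]
  change _ ↔ linFormPerpProd A B (List.finRange r) f = 0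
  constructor
  · rintro ⟨α, rfl⟩
    simp [linFormPerpProd_linForm_pow_of_mem A B (List.mem_finRange _)]
  · exact exists_eq_sum_smul_linForm_pow_of_linFormPerpProd_eq_zero hne hdist hf
end
end

section
/- Let p be a binary form of degree 2n − j (0 ≤ j ≤ n) whose catalecticant matrix A^{2n−j,n} of size (n−j+1)×(n+1) has rank at most n − J for some J ≥ j. Then the catalecticant matrix A^{2n−j,n−J} of p, of size (n+J−j+1)×(n−J+1), also has rank at most n − J; in particular there exists a nonzero form of degree n − J annihilating p. -/
open MvPolynomial

noncomputable section

/-- The catalecticant (Hankel) matrix `A^{d,s}` of size `(d−s+1)×(s+1)` of the coefficient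
vector `a` (in the binomial basis). -/
def catMatrix (d s : ℕ) (a : Fin (d+1) → ℂ) : Matrix (Fin (d - s + 1)) (Fin (s+1)) ℂ :=
  Matrix.of fun u v => if h : (u : ℕ) + (v : ℕ) < d + 1 then a ⟨(u : ℕ) + v, h⟩ else 0

namespace CatAux

open Module

lemma rank_submatrix'' {m n m' n' : Type} [Fintype m] [Fintype n] [Fintype m'] [Fintype n']
    (A : Matrix m n ℂ) (e₁ : m' ≃ m) (e₂ : n' ≃ n) :
    (A.submatrix ⇑e₁ ⇑e₂).rank = A.rank := by
  classical
  have h : (A.submatrix ⇑e₁ ⇑e₂).mulVecLin =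
      ((LinearEquiv.funCongrLeft ℂ ℂ e₁).toLinearMap.comp A.mulVecLin).comp
        (LinearEquiv.funCongrLeft ℂ ℂ e₂.symm).toLinearMap := by
    apply LinearMap.ext; intro v
    simp [Matrix.mulVecLin_apply, Matrix.submatrix_mulVec_equiv, LinearEquiv.funCongrLeft]
    rfl
  show finrank ℂ (LinearMap.range _) = finrank ℂ (LinearMap.range _)
  rw [h, LinearMap.range_comp_of_range_eq_top _ (LinearEquiv.range _), LinearMap.range_comp]
  exact LinearEquiv.finrank_map_eq _ _

variable {d : ℕ}

/-- zero-extended coefficient sequence -/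
def co (a : Fin (d+1) → ℂ) (i : ℕ) : ℂ := if h : i < d + 1 then a ⟨i, h⟩ else 0

def Kk (a : Fin (d+1) → ℂ) (s : ℕ) : Submodule ℂ (Fin (s+1) → ℂ) :=
  LinearMap.ker (catMatrix d s a).mulVecLin

def kd (a : Fin (d+1) → ℂ) (s : ℕ) : ℕ := finrank ℂ (Kk a s)

lemma mem_Kk {a : Fin (d+1) → ℂ} {s : ℕ} {b : Fin (s+1) → ℂ} :
    b ∈ Kk a s ↔ ∀ u : ℕ, u < d - s + 1 →
      ∑ v : Fin (s+1), co a (u + (v : ℕ)) * b v = 0 := by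
  have key : ∀ (u : Fin (d - s + 1)),
      (catMatrix d s a).mulVec b u = ∑ v : Fin (s+1), co a ((u : ℕ) + (v : ℕ)) * b v := by
    intro u
    simp [Matrix.mulVec, dotProduct, catMatrix, co]
  constructor
  · intro hb u hu
    have h0 : (catMatrix d s a).mulVec b = 0 := hb
    have := congrFun h0 ⟨u, hu⟩
    rw [key ⟨u, hu⟩] at this
    simpa using this
  · intro h
    show (catMatrix d s a).mulVecLin b = 0
    rw [Matrix.mulVecLin_apply]
    funext u
    rw [key u]
    simpa using h u u.2

lemma rank_add_kd (a : Fin (d+1) → ℂ) (s : ℕ) :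
    (catMatrix d s a).rank + kd a s = s + 1 := by
  have := LinearMap.finrank_range_add_finrank_ker (catMatrix d s a).mulVecLin
  rw [Module.finrank_fin_fun] at this
  exact this

lemma rank_symm (a : Fin (d+1) → ℂ) (s : ℕ) (hs : s ≤ d) :
    (catMatrix d (d - s) a).rank = (catMatrix d s a).rank := by
  have h1 : d - (d - s) + 1 = s + 1 := by omega
  have h2 : catMatrix d (d - s) a =
      ((catMatrix d s a).transpose).submatrix ⇑(finCongr h1) ⇑(Equiv.refl (Fin (d - s + 1))) := by
    ext u v
    simp only [catMatrix, Matrix.of_apply, Matrix.submatrix_apply, Matrix.transpose_apply,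
      finCongr_apply, Equiv.refl_apply, Fin.coe_cast]
    show co a ((u:ℕ)+(v:ℕ)) = co a ((v:ℕ)+(u:ℕ))
    rw [Nat.add_comm]
  rw [h2, rank_submatrix'', Matrix.rank_transpose]

end CatAux

namespace CatAux
open Module

set_option synthInstance.maxHeartbeats 1000000 in
lemma kd_succ_le (a : Fin (d+1) → ℂ) (s : ℕ) (hs : s + 1 ≤ d) :
    kd a (s+1) ≤ kd a s + 2 := by
  classical
  set ℓ : (Fin (s+2) → ℂ) →ₗ[ℂ] ℂ :=
    ∑ v : Fin (s+1), co a (d - s + (v : ℕ)) •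
      LinearMap.proj (R := ℂ) (φ := fun _ : Fin (s+2) => ℂ) v.castSucc with hldef
  set g : (Fin (s+2) → ℂ) →ₗ[ℂ] ℂ × ℂ :=
    (LinearMap.proj (R := ℂ) (φ := fun _ : Fin (s+2) => ℂ) (Fin.last (s+1))).prod ℓ with hgdef
  have hl : ∀ x : Fin (s+2) → ℂ,
      ℓ x = ∑ v : Fin (s+1), co a (d - s + (v : ℕ)) * x v.castSucc := by
    intro x
    rw [hldef]
    simp [LinearMap.sum_apply, smul_eq_mul]
  set f := g.domRestrict (Kk a (s+1)) with hfdef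
  have hrk := LinearMap.finrank_range_add_finrank_ker f
  have hKfin : kd a (s+1) = finrank ℂ (Kk a (s+1)) := rfl
  have hrange : finrank ℂ (LinearMap.range f) ≤ 2 := by
    refine le_trans (Submodule.finrank_le _) ?_
    simp
  have hker : finrank ℂ (LinearMap.ker f) ≤ kd a s := by
    set τ : (Fin (s+2) → ℂ) →ₗ[ℂ] (Fin (s+1) → ℂ) := LinearMap.funLeft ℂ ℂ Fin.castSucc with hτdef
    have hτ : ∀ (y : Fin (s+2) → ℂ) (i : Fin (s+1)), τ y i = y i.castSucc := fun _ _ => rfl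
    have hmem : ∀ x : LinearMap.ker f, τ ((x : Kk a (s+1)) : Fin (s+2) → ℂ) ∈ Kk a s := by
      rintro ⟨⟨y, hy⟩, hx⟩
      show τ y ∈ Kk a s
      have hg : g y = 0 := hx
      have hlast : y (Fin.last (s+1)) = 0 := congrArg Prod.fst hg
      have hell : ℓ y = 0 := congrArg Prod.snd hg
      rw [mem_Kk]
      intro u hu
      have hy' := mem_Kk.mp hy
      rcases Nat.lt_or_ge u (d - (s+1) + 1) with h | h
      · have h0 := hy' u h
        rw [Fin.sum_univ_castSucc] at h0
        simp only [Fin.val_last, hlast, mul_zero, add_zero, Fin.coe_castSucc] at h0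
        simpa [hτ] using h0
      · have hu' : u = d - s := by omega
        rw [hl] at hell
        subst hu'
        simpa [hτ] using hell
    let θ : LinearMap.ker f →ₗ[ℂ] Kk a s :=
      LinearMap.codRestrict (Kk a s)
        ((τ.comp (Kk a (s+1)).subtype).comp (LinearMap.ker f).subtype) hmem
    have hinj : Function.Injective θ := by
      intro x1 x2 h12
      have hval : τ (x1 : Kk a (s+1)).val = τ (x2 : Kk a (s+1)).val := congrArg Subtype.val h12
      have hg1 : g (x1 : Kk a (s+1)).val = 0 := x1.2
      have hg2 : g (x2 : Kk a (s+1)).val = 0 := x2.2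
      have hlast1 : (x1 : Kk a (s+1)).val (Fin.last (s+1)) = 0 := congrArg Prod.fst hg1
      have hlast2 : (x2 : Kk a (s+1)).val (Fin.last (s+1)) = 0 := congrArg Prod.fst hg2
      apply Subtype.ext
      apply Subtype.ext
      funext w
      induction w using Fin.lastCases with
      | last => rw [hlast1, hlast2]
      | cast i => exact congrFun hval i
    exact LinearMap.finrank_le_finrank_of_injective hinj
  have hmain : kd a (s+1) = finrank ℂ (LinearMap.range f) + finrank ℂ (LinearMap.ker f) :=
    hKfin.trans hrk.symm
  omega

end CatAux

namespace CatAux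
open Module

def padR (m : ℕ) : (Fin (m+1) → ℂ) →ₗ[ℂ] (Fin (m+2) → ℂ) where
  toFun b := Fin.snoc b 0
  map_add' b c := by
    funext w
    induction w using Fin.lastCases with
    | last => simp
    | cast i => simp
  map_smul' r b := by
    funext w
    induction w using Fin.lastCases with
    | last => simp
    | cast i => simp

def padL (m : ℕ) : (Fin (m+1) → ℂ) →ₗ[ℂ] (Fin (m+2) → ℂ) where
  toFun b := Fin.cons 0 b
  map_add' b c := by
    funext w
    induction w using Fin.cases with
    | zero => simp
    | succ i => simp
  map_smul' r b := by
    funext w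
    induction w using Fin.cases with
    | zero => simp
    | succ i => simp

lemma padR_mem {a : Fin (d+1) → ℂ} {s : ℕ} (hs : s + 2 ≤ d) {b : Fin (s+2) → ℂ}
    (hb : b ∈ Kk a (s+1)) : padR (s+1) b ∈ Kk a (s+2) := by
  rw [mem_Kk] at hb ⊢
  intro u hu
  show ∑ w : Fin (s+3), co a (u + (w : ℕ)) * (Fin.snoc b 0 : Fin (s+3) → ℂ) w = 0
  rw [Fin.sum_univ_castSucc]
  simp only [Fin.snoc_castSucc, Fin.snoc_last, mul_zero, add_zero, Fin.coe_castSucc]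
  exact hb u (by omega)

lemma padL_mem {a : Fin (d+1) → ℂ} {s : ℕ} (hs : s + 2 ≤ d) {c : Fin (s+2) → ℂ}
    (hc : c ∈ Kk a (s+1)) : padL (s+1) c ∈ Kk a (s+2) := by
  rw [mem_Kk] at hc ⊢
  intro u hu
  show ∑ w : Fin (s+3), co a (u + (w : ℕ)) * (Fin.cons 0 c : Fin (s+3) → ℂ) w = 0
  rw [Fin.sum_univ_succ]
  simp only [Fin.cons_zero, mul_zero, Fin.cons_succ, Fin.val_succ, Fin.val_zero, zero_add]
  have h1 := hc (u+1) (by omega)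
  calc ∑ v : Fin (s+2), co a (u + ((v : ℕ) + 1)) * c v
      = ∑ v : Fin (s+2), co a ((u+1) + (v : ℕ)) * c v := by
        refine Finset.sum_congr rfl fun v _ => ?_
        rw [show u + ((v : ℕ) + 1) = (u+1) + (v : ℕ) by omega]
    _ = 0 := h1

set_option synthInstance.maxHeartbeats 1000000 in
lemma kd_convex (a : Fin (d+1) → ℂ) (s : ℕ) (hs : s + 2 ≤ d) :
    kd a (s+1) + kd a (s+1) ≤ kd a (s+2) + kd a s := by
  classical
  set P := (Kk a (s+1)).map (padR (s+1)) with hPdef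
  set S := (Kk a (s+1)).map (padL (s+1)) with hSdef
  have hPK : P ≤ Kk a (s+2) := by rintro x ⟨b, hb, rfl⟩; exact padR_mem hs hb
  have hSK : S ≤ Kk a (s+2) := by rintro x ⟨c, hc, rfl⟩; exact padL_mem hs hc
  have hinjR : Function.Injective (padR (s+1)) := by
    intro b c h
    funext i
    have := congrFun h i.castSucc
    simpa [padR] using this
  have hinjL : Function.Injective (padL (s+1)) := by
    intro b c h
    funext i
    have := congrFun h i.succ
    simpa [padL] using this
  have hP : finrank ℂ P = kd a (s+1) :=
    (LinearEquiv.finrank_eq (Submodule.equivMapOfInjective _ hinjR (Kk a (s+1)))).symm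
  have hS : finrank ℂ S = kd a (s+1) :=
    (LinearEquiv.finrank_eq (Submodule.equivMapOfInjective _ hinjL (Kk a (s+1)))).symm
  have hsup : finrank ℂ ↥(P ⊔ S) ≤ kd a (s+2) := Submodule.finrank_mono (sup_le hPK hSK)
  have heq := Submodule.finrank_sup_add_finrank_inf_eq P S
  have hinf : finrank ℂ ↥(P ⊓ S) ≤ kd a s := by
    set τ2 : (Fin (s+3) → ℂ) →ₗ[ℂ] (Fin (s+1) → ℂ) :=
      LinearMap.funLeft ℂ ℂ (fun w : Fin (s+1) => w.succ.castSucc) with hτ2def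
    have hτ2 : ∀ (y : Fin (s+3) → ℂ) (i : Fin (s+1)), τ2 y i = y i.succ.castSucc := fun _ _ => rfl
    have hkey : ∀ x : Fin (s+3) → ℂ, x ∈ P → x ∈ S → τ2 x ∈ Kk a s := by
      intro x hxP hxS
      obtain ⟨b, hb, hbx⟩ := hxP
      obtain ⟨c, hc, hcx⟩ := hxS
      have hxb : ∀ w : Fin (s+2), x w.castSucc = b w := by
        intro w; rw [← hbx]; show (Fin.snoc b 0 : Fin (s+3) → ℂ) w.castSucc = b w
        simp
      have hxc : ∀ w : Fin (s+2), x w.succ = c w := by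
        intro w; rw [← hcx]; show (Fin.cons 0 c : Fin (s+3) → ℂ) w.succ = c w
        simp
      have hx0 : x 0 = 0 := by
        rw [← hcx]; show (Fin.cons 0 c : Fin (s+3) → ℂ) 0 = 0; simp
      have hxlast : x (Fin.last (s+2)) = 0 := by
        rw [← hbx]; show (Fin.snoc b 0 : Fin (s+3) → ℂ) (Fin.last (s+2)) = 0; simp
      have hclast : c (Fin.last (s+1)) = 0 := by
        rw [← hxc (Fin.last (s+1)), Fin.succ_last]; exact hxlast
      have hb0 : b 0 = 0 := by
        rw [← hxb 0]; exact hx0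
      have htc : ∀ w : Fin (s+1), τ2 x w = c w.castSucc := by
        intro w
        rw [hτ2, ← Fin.succ_castSucc, hxc w.castSucc]
      have htb : ∀ w : Fin (s+1), τ2 x w = b w.succ := by
        intro w
        rw [hτ2, hxb w.succ]
      rw [mem_Kk]
      intro u hu
      rcases Nat.lt_or_ge u (d - (s+1) + 1) with h | h
      · have h0 := (mem_Kk.mp hc) u h
        rw [Fin.sum_univ_castSucc] at h0
        simp only [hclast, mul_zero, add_zero, Fin.coe_castSucc] at h0
        calc ∑ w : Fin (s+1), co a (u + (w : ℕ)) * τ2 x w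
            = ∑ w : Fin (s+1), co a (u + (w : ℕ)) * c w.castSucc := by
              refine Finset.sum_congr rfl fun w _ => by rw [htc]
          _ = 0 := h0
      · have hu' : u = d - s := by omega
        subst hu'
        have h0 := (mem_Kk.mp hb) (d - s - 1) (by omega)
        rw [Fin.sum_univ_succ] at h0
        simp only [hb0, mul_zero, Fin.val_succ, Fin.val_zero, add_zero, zero_add] at h0
        calc ∑ w : Fin (s+1), co a (d - s + (w : ℕ)) * τ2 x w
            = ∑ w : Fin (s+1), co a (d - s - 1 + ((w : ℕ) + 1)) * b w.succ := by
              refine Finset.sum_congr rfl fun w _ => ?_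
              rw [htb, show d - s + (w : ℕ) = d - s - 1 + ((w : ℕ) + 1) by omega]
          _ = 0 := h0
    have hmem : ∀ x : ↥(P ⊓ S), τ2 (x : Fin (s+3) → ℂ) ∈ Kk a s := by
      rintro ⟨x, hxP, hxS⟩
      exact hkey x hxP hxS
    let θ : ↥(P ⊓ S) →ₗ[ℂ] Kk a s :=
      LinearMap.codRestrict (Kk a s) (τ2.comp (P ⊓ S).subtype) hmem
    have hinj : Function.Injective θ := by
      intro x1 x2 h12
      have hval : τ2 (x1 : Fin (s+3) → ℂ) = τ2 (x2 : Fin (s+3) → ℂ) := congrArg Subtype.val h12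
      have h0 : ∀ x : ↥(P ⊓ S), (x : Fin (s+3) → ℂ) 0 = 0 := by
        rintro ⟨x, hxP, hxS⟩
        obtain ⟨c, hc, hcx⟩ := hxS
        show x 0 = 0
        rw [← hcx]; show (Fin.cons 0 c : Fin (s+3) → ℂ) 0 = 0; simp
      have hlast : ∀ x : ↥(P ⊓ S), (x : Fin (s+3) → ℂ) (Fin.last (s+2)) = 0 := by
        rintro ⟨x, hxP, hxS⟩
        obtain ⟨b, hb, hbx⟩ := hxP
        show x (Fin.last (s+2)) = 0
        rw [← hbx]; show (Fin.snoc b 0 : Fin (s+3) → ℂ) (Fin.last (s+2)) = 0; simp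
      apply Subtype.ext
      funext w
      induction w using Fin.cases with
      | zero => rw [h0 x1, h0 x2]
      | succ v =>
        induction v using Fin.lastCases with
        | last =>
          rw [Fin.succ_last]
          rw [hlast x1, hlast x2]
        | cast i =>
          rw [Fin.succ_castSucc]
          exact congrFun hval i
    exact LinearMap.finrank_le_finrank_of_injective hinj
  omega

end CatAux

namespace CatAux
open Module

def kz (a : Fin (d+1) → ℂ) (s : ℕ) : ℤ := (kd a s : ℤ)

def Dz (a : Fin (d+1) → ℂ) (s : ℕ) : ℤ := kz a (s+1) - kz a s

lemma Dz_le_two (a : Fin (d+1) → ℂ) (s : ℕ) (hs : s + 1 ≤ d) : Dz a s ≤ 2 := by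
  have := kd_succ_le a s hs
  simp only [Dz, kz]
  omega

lemma Dz_mono (a : Fin (d+1) → ℂ) : ∀ t s : ℕ, s ≤ t → t + 1 ≤ d → Dz a s ≤ Dz a t := by
  intro t
  induction t with
  | zero =>
    intro s h1 _
    have h0 : s = 0 := Nat.le_zero.mp h1
    rw [h0]
  | succ t ih =>
    intro s h1 h2
    rcases Nat.lt_or_ge s (t+1) with h | h
    · have h3 := ih s (by omega) (by omega)
      have h4 : Dz a t ≤ Dz a (t+1) := by
        have hcv := kd_convex a t (by omega)
        simp only [Dz, kz, show t+1+1 = t+2 from rfl]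
        omega
      omega
    · have hst : s = t + 1 := by omega
      rw [hst]

lemma rank_congr (a : Fin (d+1) → ℂ) {s s' : ℕ} (h : s = s') :
    (catMatrix d s a).rank = (catMatrix d s' a).rank := by subst h; rfl

lemma sum_ub (a : Fin (d+1) → ℂ) (c : ℤ) :
    ∀ (m x : ℕ), (∀ i, i < m → Dz a (x+i) ≤ c) → kz a (x+m) - kz a x ≤ m * c := by
  intro m
  induction m with
  | zero => intro x _; simp
  | succ m ih =>
    intro x h
    have h1 := ih x (fun i hi => h i (by omega))
    have h2 : kz a (x+m+1) - kz a (x+m) ≤ c := h m (by omega)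
    have hxm : x + (m+1) = (x+m)+1 := rfl
    rw [hxm]
    have e : ((m:ℤ)+1) * c = (m:ℤ) * c + c := by ring
    push_cast
    linarith

lemma sum_lb (a : Fin (d+1) → ℂ) (c : ℤ) :
    ∀ (m x : ℕ), (∀ i, i < m → c ≤ Dz a (x+i)) → (m : ℤ) * c ≤ kz a (x+m) - kz a x := by
  intro m
  induction m with
  | zero => intro x _; simp
  | succ m ih =>
    intro x h
    have h1 := ih x (fun i hi => h i (by omega))
    have h2 : c ≤ kz a (x+m+1) - kz a (x+m) := h m (by omega)
    have hxm : x + (m+1) = (x+m)+1 := rfl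
    rw [hxm]
    push_cast
    linarith

end CatAux

/-- if the catalecticant `A^{2n−j,n}` of a binary form `p` of degree `2n−j`
has rank at most `n − J` (with `j ≤ J ≤ n`), then so does the catalecticant `A^{2n−j,n−J}`,
and in particular there is a nonzero form of degree `n − J` annihilating `p` (a nonzero
kernel vector of `A^{2n−j,n−J}`). -/
theorem catalecticant_rank_drop (n j J : ℕ) (hjJ : j ≤ J) (hJn : J ≤ n)
    (a : Fin (2 * n - j + 1) → ℂ)
    (h1 : (catMatrix (2 * n - j) n a).rank ≤ n - J) :
    (catMatrix (2 * n - j) (n - J) a).rank ≤ n - J ∧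
      ∃ b : Fin (n - J + 1) → ℂ, b ≠ 0 ∧ (catMatrix (2 * n - j) (n - J) a).mulVec b = 0 := by
  have hjn : j ≤ n := le_trans hjJ hJn
  have hF1n := CatAux.rank_add_kd a n
  have hF1a := CatAux.rank_add_kd a (n - J)
  have key : 1 ≤ CatAux.kd a (n - J) := by
    by_contra hcon
    push_neg at hcon
    have h0 : CatAux.kd a (n - J) = 0 := by omega
    have hkn : J + 1 ≤ CatAux.kd a n := by omega
    have hsym : (catMatrix (2*n - j) (n + J - j) a).rank
        = (catMatrix (2*n - j) (n - J) a).rank :=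
      (CatAux.rank_congr a (show n + J - j = 2*n - j - (n - J) by omega)).trans
        (CatAux.rank_symm a (n - J) (by omega))
    have hF1b := CatAux.rank_add_kd a (n + J - j)
    have hk2 : CatAux.kd a (n + J - j) = 2*J - j := by omega
    rcases Nat.eq_zero_or_pos J with hJ0 | hJ1
    · rw [show n - J = n from by omega] at h0
      omega
    · have hA := CatAux.sum_ub a (CatAux.Dz a (n-1)) J (n - J)
        (fun i hi => CatAux.Dz_mono a (n-1) ((n-J)+i) (by omega) (by omega))
      rw [show (n-J) + J = n from by omega] at hA
      have hkzn : (J:ℤ) + 1 ≤ CatAux.kz a n := by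
        simp only [CatAux.kz]
        exact_mod_cast hkn
      have hkz0 : CatAux.kz a (n-J) = 0 := by simp [CatAux.kz, h0]
      have hJD : (J:ℤ) + 1 ≤ (J:ℤ) * CatAux.Dz a (n-1) := by
        rw [hkz0] at hA
        linarith
      have hD : 2 ≤ CatAux.Dz a (n-1) := by
        by_contra hD'
        push_neg at hD'
        have h5 : CatAux.Dz a (n-1) ≤ 1 := by omega
        have h6 : (J:ℤ) * CatAux.Dz a (n-1) ≤ (J:ℤ) * 1 :=
          mul_le_mul_of_nonneg_left h5 (by exact_mod_cast Nat.zero_le J)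
        linarith
      have hB := CatAux.sum_lb a 2 (J - j) n
        (fun i hi => le_trans hD (CatAux.Dz_mono a (n+i) (n-1) (by omega) (by omega)))
      rw [show n + (J - j) = n + J - j from by omega] at hB
      have hkz2 : CatAux.kz a (n + J - j) = ((2*J - j : ℕ) : ℤ) := by
        simp [CatAux.kz, hk2]
      have hfin : CatAux.kz a n ≤ (j:ℤ) := by
        rw [hkz2] at hB
        have e1 : ((2*J - j : ℕ) : ℤ) = 2*(J:ℤ) - j := by omega
        rw [e1] at hB
        have e2 : ((J - j : ℕ) : ℤ) = (J:ℤ) - j := by omega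
        rw [e2] at hB
        linarith
      omega
  refine ⟨by omega, ?_⟩
  have hne : CatAux.Kk a (n - J) ≠ ⊥ := by
    intro hbot
    have h0 : CatAux.kd a (n - J) = 0 := by
      simp [CatAux.kd, hbot]
    omega
  obtain ⟨b, hbmem, hbne⟩ := Submodule.exists_mem_ne_zero_of_ne_bot hne
  refine ⟨b, hbne, ?_⟩
  have hb0 : (catMatrix (2*n - j) (n - J) a).mulVecLin b = 0 := hbmem
  simpa [Matrix.mulVecLin_apply] using hb0
end
end
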